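/- arXiv:math/9902144 — 3 statements merged into one kernel-verified Lean document; each statement's English description precedes it below -/
import Mathlib

section
/- Let 0 ≤ l ≤ min(m, n) and let Ω_l = ∑_{i=0}^{l} c_{i,l-i} v_i ⊗ w_{l-i} ∈ V_m ⊗ V_n, where c_{i,l-i} = (-1)^i q^{i(2l-n-i-1)} ∏_{j=0}^{i} [n-l+j]_q / [m-j+1]_q. Then e Ω_l = 0, where e acts on V_m ⊗ V_n via the comultiplication e(v ⊗ w) = e v ⊗ K w + v ⊗ e w. -/
open scoped BigOperators

/-- The `q`-integer `[r]_q = (q^r - q^{-r})/(q - q⁻¹)`. -/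
noncomputable def qint (q : ℂ) (r : ℤ) : ℂ := (q ^ r - q ^ (-r)) / (q - q⁻¹)

/-- The `q`-factorial `[r]_q! = ∏_{s=1}^r [s]_q`. -/
noncomputable def qfact (q : ℂ) (r : ℕ) : ℂ := ∏ s ∈ Finset.range r, qint q ((s : ℤ) + 1)

/-- The `q`-binomial coefficient `[r choose s]_q`. -/
noncomputable def qbinom (q : ℂ) (r s : ℕ) : ℂ := qfact q r / (qfact q s * qfact q (r - s))

/-- `q` is not a root of unity. -/
def NotRootOfUnity (q : ℂ) : Prop := ∀ k : ℕ, 0 < k → q ^ k ≠ 1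

/-- The underlying space of `V_m ⊗ V_n` in terms of the coefficients with respect to the
basis `v_i ⊗ w_j`, `0 ≤ i ≤ m`, `0 ≤ j ≤ n`. -/
abbrev W (m n : ℕ) := Fin (m + 1) → Fin (n + 1) → ℂ

/-- Extension of a coefficient array to all of `ℕ × ℕ`, zero out of range. -/
noncomputable def uext {m n : ℕ} (u : W m n) (a b : ℕ) : ℂ :=
  if h : a ≤ m ∧ b ≤ n then u ⟨a, by omega⟩ ⟨b, by omega⟩ else 0

/-- The basis vector `v_i ⊗ w_j` of `V_m ⊗ V_n`. -/
def basisW (m n i j : ℕ) : W m n := fun a b => if (a : ℕ) = i ∧ (b : ℕ) = j then 1 else 0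

/-- Action of `e` on `V_m ⊗ V_n`: `e (v ⊗ w) = e v ⊗ K w + v ⊗ e w`, where on `V_m`
`e v_i = [m+1-i]_q v_{i-1}` and `K v_i = q^{m-2i} v_i`. -/
noncomputable def eT (q : ℂ) (m n : ℕ) (u : W m n) : W m n := fun a b =>
  qint q ((m : ℤ) - ((a : ℕ) : ℤ)) * q ^ ((n : ℤ) - 2 * ((b : ℕ) : ℤ)) *
      uext u ((a : ℕ) + 1) (b : ℕ)
    + qint q ((n : ℤ) - ((b : ℕ) : ℤ)) * uext u (a : ℕ) ((b : ℕ) + 1)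

/-- Action of `f` on `V_m ⊗ V_n`: `f (v ⊗ w) = f v ⊗ w + K⁻¹ v ⊗ f w`, where on `V_m`
`f v_i = [i+1]_q v_{i+1}` and `K⁻¹ v_i = q^{-(m-2i)} v_i`. -/
noncomputable def fT (q : ℂ) (m n : ℕ) (u : W m n) : W m n := fun a b =>
  qint q ((a : ℕ) : ℤ) * uext u ((a : ℕ) - 1) (b : ℕ)
    + q ^ (-((m : ℤ) - 2 * ((a : ℕ) : ℤ))) * qint q ((b : ℕ) : ℤ) *
        uext u (a : ℕ) ((b : ℕ) - 1)

/-- Action of `K` on `V_m ⊗ V_n`: `K (v ⊗ w) = K v ⊗ K w`. -/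
noncomputable def KT (q : ℂ) (m n : ℕ) (u : W m n) : W m n := fun a b =>
  q ^ ((m : ℤ) - 2 * ((a : ℕ) : ℤ)) * q ^ ((n : ℤ) - 2 * ((b : ℕ) : ℤ)) * u a b

/-- Action of `e₀` on the evaluation module `V_m(x) ⊗ V_n(y)`:
`e₀ (v ⊗ w) = q⁻¹ x (f v) ⊗ (K⁻¹ w) + q⁻¹ y v ⊗ (f w)`. -/
noncomputable def e0T (q x y : ℂ) (m n : ℕ) (u : W m n) : W m n := fun a b =>
  q⁻¹ * x * qint q ((a : ℕ) : ℤ) * q ^ (-((n : ℤ) - 2 * ((b : ℕ) : ℤ))) *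
      uext u ((a : ℕ) - 1) (b : ℕ)
    + q⁻¹ * y * qint q ((b : ℕ) : ℤ) * uext u (a : ℕ) ((b : ℕ) - 1)

/-- Action of `f₀` on the evaluation module `V_m(x) ⊗ V_n(y)`:
`f₀ (v ⊗ w) = q x⁻¹ (e v) ⊗ w + q y⁻¹ (K v) ⊗ (e w)`. -/
noncomputable def f0T (q x y : ℂ) (m n : ℕ) (u : W m n) : W m n := fun a b =>
  q * x⁻¹ * qint q ((m : ℤ) - ((a : ℕ) : ℤ)) * uext u ((a : ℕ) + 1) (b : ℕ)
    + q * y⁻¹ * q ^ ((m : ℤ) - 2 * ((a : ℕ) : ℤ)) * qint q ((n : ℤ) - ((b : ℕ) : ℤ)) *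
        uext u (a : ℕ) ((b : ℕ) + 1)

/-- The coefficient `c_{i,l-i} = (-1)^i q^{i(2l-n-i-1)} ∏_{j=0}^i [n-l+j]_q/[m-j+1]_q`. -/
noncomputable def cOmega (q : ℂ) (m n l i : ℕ) : ℂ :=
  (-1 : ℂ) ^ i * q ^ ((i : ℤ) * (2 * (l : ℤ) - (n : ℤ) - (i : ℤ) - 1)) *
    ∏ j ∈ Finset.range (i + 1),
      qint q ((n : ℤ) - (l : ℤ) + (j : ℤ)) / qint q ((m : ℤ) - (j : ℤ) + 1)

/-- The highest weight vector `Ω_l = ∑_{i=0}^l c_{i,l-i} v_i ⊗ w_{l-i}`. -/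
noncomputable def Omega (q : ℂ) (m n l : ℕ) : W m n :=
  ∑ i ∈ Finset.range (l + 1), cOmega q m n l i • basisW m n i (l - i)

/-- The coefficient `d_{i,l} = (-1)^i q^{i(-m+2l-i-1)} ∏_{j=0}^i [m-l+j]_q/[n-j+1]_q`. -/
noncomputable def dPhi (q : ℂ) (m n l i : ℕ) : ℂ :=
  (-1 : ℂ) ^ i * q ^ ((i : ℤ) * (-(m : ℤ) + 2 * (l : ℤ) - (i : ℤ) - 1)) *
    ∏ j ∈ Finset.range (i + 1),
      qint q ((m : ℤ) - (l : ℤ) + (j : ℤ)) / qint q ((n : ℤ) - (j : ℤ) + 1)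

/-- The lowest weight vector `Φ_l = ∑_{i=0}^l d_{i,l} v_{m-l+i} ⊗ w_{n-i}`. -/
noncomputable def Phi (q : ℂ) (m n l : ℕ) : W m n :=
  ∑ i ∈ Finset.range (l + 1), dPhi q m n l i • basisW m n (m - l + i) (n - i)


lemma qpow_ne_one (q : ℂ) (hq' : NotRootOfUnity q) (r : ℤ) (hr : r ≠ 0) :
    q ^ r ≠ 1 := by
  intro h
  refine hq' r.natAbs (by omega) ?_
  rcases Int.natAbs_eq r with he | he
  · rw [← zpow_natCast, ← he, h]
  · rw [← zpow_natCast, show ((r.natAbs : ℤ)) = -r by omega, zpow_neg, h, inv_one]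

lemma qint_ne_zero (q : ℂ) (hq : q ≠ 0) (hq' : NotRootOfUnity q) (r : ℤ) (hr : r ≠ 0) :
    qint q r ≠ 0 := by
  have hd : q - q⁻¹ ≠ 0 := by
    intro h
    have h1 : q = q⁻¹ := sub_eq_zero.mp h
    have h2 : q ^ (2:ℕ) = 1 := by
      rw [sq]; nth_rewrite 2 [h1]; exact mul_inv_cancel₀ hq
    exact hq' 2 (by norm_num) h2
  have hn : q ^ r - q ^ (-r) ≠ 0 := by
    intro h
    have h1 : q ^ r = q ^ (-r) := sub_eq_zero.mp h
    have h2 : q ^ (2*r) = 1 := by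
      rw [two_mul, zpow_add₀ hq]
      nth_rewrite 2 [h1]
      rw [← zpow_add₀ hq]
      simp
    exact qpow_ne_one q hq' (2*r) (by omega) h2
  exact div_ne_zero hn hd

lemma uext_Omega (q : ℂ) (m n l : ℕ) (hl : l ≤ min m n) (a b : ℕ) :
    uext (Omega q m n l) a b =
      if a ≤ l ∧ b = l - a then cOmega q m n l a else 0 := by
  by_cases h : a ≤ m ∧ b ≤ n
  · rw [uext, dif_pos h]
    simp only [Omega, Finset.sum_apply, Pi.smul_apply, smul_eq_mul, basisW]
    by_cases h2 : a ≤ l ∧ b = l - a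
    · rw [if_pos h2, Finset.sum_eq_single a]
      · simp [h2.2]
      · intro i hi hia
        rw [if_neg (by rintro ⟨h3, -⟩; exact hia h3.symm), mul_zero]
      · intro hna
        exact absurd (Finset.mem_range.mpr (by omega)) hna
    · rw [if_neg h2, Finset.sum_eq_zero]
      intro i hi
      have hi' : i ≤ l := by simp only [Finset.mem_range] at hi; omega
      rw [if_neg (by rintro ⟨h3, h4⟩; omega), mul_zero]
  · rw [uext, dif_neg h, if_neg]
    omega

lemma cOmega_succ (q : ℂ) (hq : q ≠ 0) (m n l i : ℕ) :
    cOmega q m n l (i+1) =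
      -q ^ (2*(l:ℤ) - n - 2*i - 2) *
        (qint q ((n:ℤ) - l + i + 1) / qint q ((m:ℤ) - i)) * cOmega q m n l i := by
  unfold cOmega
  rw [Finset.prod_range_succ, pow_succ]
  push_cast
  rw [show ((i:ℤ)+1)*(2*(l:ℤ)-(n:ℤ)-((i:ℤ)+1)-1)
        = (i:ℤ)*(2*(l:ℤ)-(n:ℤ)-(i:ℤ)-1) + (2*(l:ℤ)-n-2*i-2) by ring,
      zpow_add₀ hq,
      show (m:ℤ) - ((i:ℤ)+1) + 1 = (m:ℤ) - i by ring,
      show (n:ℤ) - (l:ℤ) + ((i:ℤ)+1) = (n:ℤ) - l + i + 1 by ring]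
  ring

/-- `e Ω_l = 0` in `V_m ⊗ V_n`, for `0 ≤ l ≤ min(m,n)`. -/
theorem e_Omega_eq_zero (q : ℂ) (hq : q ≠ 0) (hq' : NotRootOfUnity q)
    (m n l : ℕ) (hl : l ≤ min m n) :
    eT q m n (Omega q m n l) = 0 := by
  funext a b
  show eT q m n (Omega q m n l) a b = 0
  unfold eT
  simp only [uext_Omega q m n l hl]
  set A := ((a : Fin (m+1)) : ℕ) with hA
  set B := ((b : Fin (n+1)) : ℕ) with hB
  by_cases hc : A < l ∧ B = l - A - 1
  · obtain ⟨h1, h2⟩ := hc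
    rw [if_pos ⟨by omega, by omega⟩, if_pos ⟨by omega, by omega⟩]
    rw [cOmega_succ q hq m n l A]
    have hnz : qint q ((m:ℤ) - A) ≠ 0 := by
      apply qint_ne_zero q hq hq'
      omega
    have hinv : qint q ((m:ℤ) - A) * (qint q ((m:ℤ) - A))⁻¹ = 1 := mul_inv_cancel₀ hnz
    have hq1 : q ^ ((n:ℤ) - 2*(B:ℤ)) * q ^ (2*(l:ℤ) - n - 2*A - 2) = 1 := by
      rw [← zpow_add₀ hq, show ((n:ℤ) - 2*B) + (2*(l:ℤ)-n-2*A-2) = 0 by omega, zpow_zero]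
    have hqint : qint q ((n:ℤ) - B) = qint q ((n:ℤ) - l + A + 1) := by
      rw [show (n:ℤ) - B = (n:ℤ) - l + A + 1 by omega]
    rw [hqint, div_eq_mul_inv]
    linear_combination
      (-(qint q ((m:ℤ) - A) * (qint q ((m:ℤ) - A))⁻¹ *
          qint q ((n:ℤ) - l + A + 1) * cOmega q m n l A)) * hq1
        + (-(qint q ((n:ℤ) - l + A + 1) * cOmega q m n l A)) * hinv
  · rw [if_neg (by omega), if_neg (by omega)]
    ring
end

section
/- Let 0 ≤ l ≤ min(m, n) with l ≤ m - 1, and let Ω_l = ∑_{i=0}^{l} c_{i,l-i} v_i ⊗ w_{l-i} with c_{i,l-i} = (-1)^i q^{i(2l-n-i-1)} ∏_{j=0}^{i} [n-l+j]_q / [m-j+1]_q. Then the coefficient of the basis vector v_{m-l} ⊗ w_n in f^{m+n-2l} Ω_l (where f acts on V_m ⊗ V_n by f(v ⊗ w) = f v ⊗ w + K^{-1} v ⊗ f w) equals q^{-l(n-l)} ∑_{i=0}^{min(l, m-l)} (-1)^i q^{-i} ([m+n-2l]_q! [m-l]_q! [n]_q! / ([m-l-i]_q! [n-l+i]_q!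 [i]_q! [l-i]_q!)) · ∏_{j=0}^{i} [n-l+j]_q / [m-j+1]_q. -/
open scoped BigOperators

/-!
On `V_m ⊗ V_n` the operator `f` is the sum of `X = f ⊗ 1` and `Y = K⁻¹ ⊗ f`, which
`q`-commute: `Y X = q² X Y`. Hence the coefficients of `f^N (v_i ⊗ w_j)` are `q`-binomial
coefficients times ratios of `q`-factorials and a power of `q` (`fPowCoeff`), by induction on `N`
with the `q`-Pascal rule as inductive step. Expanding `Ω_l`, the summand `v_i ⊗ w_{l-i}` reaches
`v_{m-l} ⊗ w_n` exactly when `i ≤ m - l`, and each surviving term simplifies to the stated one.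
-/

section QInt

variable {q : ℂ}

theorem sub_inv_ne_zero {K : Type*} [Field K] {x : K} (hx : x ≠ 0) (hx2 : x ^ 2 ≠ 1) :
    x - x⁻¹ ≠ 0 := by
  intro h
  apply hx2
  rw [sq]
  nth_rw 1 [sub_eq_zero.mp h]
  exact inv_mul_cancel₀ hx

theorem qint_natCast_ne_zero (hq : q ≠ 0) (hq' : NotRootOfUnity q) {s : ℕ} (hs : s ≠ 0) :
    qint q s ≠ 0 := by
  refine div_ne_zero ?_ (sub_inv_ne_zero hq (hq' 2 two_pos))
  rw [zpow_neg, zpow_natCast]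
  refine sub_inv_ne_zero (pow_ne_zero s hq) ?_
  rw [← pow_mul]
  exact hq' _ (by omega)

theorem qint_add (hq : q ≠ 0) (x y : ℤ) :
    qint q (x + y) = q ^ x * qint q y + q ^ (-y) * qint q x := by
  simp only [qint, neg_add, zpow_add₀ hq]
  ring

@[simp]
theorem qfact_zero : qfact q 0 = 1 := Finset.prod_range_zero _

theorem qfact_succ (r : ℕ) : qfact q (r + 1) = qfact q r * qint q (r + 1 : ℕ) := by
  rw [qfact, Finset.prod_range_succ, Nat.cast_succ]
  rfl

theorem qfact_ne_zero (hq : q ≠ 0) (hq' : NotRootOfUnity q) (r : ℕ) : qfact q r ≠ 0 :=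
  Finset.prod_ne_zero_iff.mpr fun s _ => by
    exact_mod_cast qint_natCast_ne_zero hq hq' s.succ_ne_zero

theorem qbinom_self (hq : q ≠ 0) (hq' : NotRootOfUnity q) (r : ℕ) : qbinom q r r = 1 := by
  rw [qbinom, Nat.sub_self, qfact_zero, mul_one, div_self (qfact_ne_zero hq hq' r)]

theorem qbinom_zero_right (hq : q ≠ 0) (hq' : NotRootOfUnity q) (r : ℕ) : qbinom q r 0 = 1 := by
  rw [qbinom, Nat.sub_zero, qfact_zero, one_mul, div_self (qfact_ne_zero hq hq' r)]

theorem qbinom_pascal (hq : q ≠ 0) (hq' : NotRootOfUnity q) (s t : ℕ) :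
    qbinom q (s + t + 2) (s + 1)
      = q ^ (-(t + 1 : ℤ)) * qbinom q (s + t + 1) s
        + q ^ (s + 1 : ℤ) * qbinom q (s + t + 1) (s + 1) := by
  have hsplit : qint q (s + t + 2 : ℕ)
      = q ^ (s + 1 : ℤ) * qint q (t + 1 : ℕ) + q ^ (-(t + 1 : ℤ)) * qint q (s + 1 : ℕ) := by
    rw [show ((s + t + 2 : ℕ) : ℤ) = (s + 1 : ℕ) + (t + 1 : ℕ) by push_cast; ring, qint_add hq]
    push_cast; ring
  have := qfact_ne_zero hq hq' s
  have := qfact_ne_zero hq hq' t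
  have := qint_natCast_ne_zero hq hq' s.succ_ne_zero
  have := qint_natCast_ne_zero hq hq' t.succ_ne_zero
  simp only [qbinom, show s + t + 2 - (s + 1) = t + 1 by omega,
    show s + t + 1 - s = t + 1 by omega, show s + t + 1 - (s + 1) = t by omega,
    show s + t + 2 = s + t + 1 + 1 by omega, qfact_succ, hsplit]
  field_simp
  ring

end QInt

section FPow

variable {q : ℂ}

noncomputable def fPowCoeff (q : ℂ) (m i j s t : ℕ) : ℂ :=
  qbinom q (s + t) s * q ^ ((s : ℤ) * t - t * (m - 2 * i)) *
    (qfact q (i + s) / qfact q i) * (qfact q (j + t) / qfact q j)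

theorem fPowCoeff_zero_zero (hq : q ≠ 0) (hq' : NotRootOfUnity q) (m i j : ℕ) :
    fPowCoeff q m i j 0 0 = 1 := by
  simp [fPowCoeff, qbinom_self hq hq', qfact_ne_zero hq hq']

theorem fPowCoeff_succ_zero (hq : q ≠ 0) (hq' : NotRootOfUnity q) (m i j s : ℕ) :
    fPowCoeff q m i j (s + 1) 0 = qint q (i + s + 1 : ℕ) * fPowCoeff q m i j s 0 := by
  simp only [fPowCoeff, Nat.add_zero, Nat.cast_zero, mul_zero, zero_mul, sub_zero, zpow_zero,
    qbinom_self hq hq', ← add_assoc, qfact_succ]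
  ring

theorem fPowCoeff_zero_succ (hq : q ≠ 0) (hq' : NotRootOfUnity q) (m i j t : ℕ) :
    fPowCoeff q m i j 0 (t + 1)
      = q ^ (-((m : ℤ) - 2 * i)) * qint q (j + t + 1 : ℕ) * fPowCoeff q m i j 0 t := by
  simp only [fPowCoeff, Nat.zero_add, qbinom_zero_right hq hq', ← add_assoc, qfact_succ]
  rw [show ((0 : ℕ) : ℤ) * (t + 1 : ℕ) - (t + 1 : ℕ) * (m - 2 * i)
      = -((m : ℤ) - 2 * i) + ((0 : ℕ) * t - t * (m - 2 * i)) by push_cast; ring, zpow_add₀ hq]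
  ring

theorem fPowCoeff_succ_succ (hq : q ≠ 0) (hq' : NotRootOfUnity q) (m i j s t : ℕ) :
    fPowCoeff q m i j (s + 1) (t + 1)
      = qint q (i + s + 1 : ℕ) * fPowCoeff q m i j s (t + 1)
        + q ^ (-((m : ℤ) - 2 * (i + s + 1 : ℕ))) * qint q (j + t + 1 : ℕ)
          * fPowCoeff q m i j (s + 1) t := by
  set E : ℤ := (s + 1 : ℕ) * (t + 1 : ℕ) - (t + 1 : ℕ) * (m - 2 * i)
  have hleft : q ^ ((s : ℤ) * (t + 1 : ℕ) - (t + 1 : ℕ) * (m - 2 * i))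
      = q ^ E * q ^ (-(t + 1 : ℤ)) := by
    rw [← zpow_add₀ hq]; congr 1; simp only [E]; push_cast; ring
  have hright : q ^ (-((m : ℤ) - 2 * (i + s + 1 : ℕ)))
        * q ^ (((s + 1 : ℕ) : ℤ) * t - t * (m - 2 * i))
      = q ^ E * q ^ (s + 1 : ℤ) := by
    rw [← zpow_add₀ hq, ← zpow_add₀ hq]; congr 1; simp only [E]; push_cast; ring
  have hpascal := qbinom_pascal hq hq' s t
  simp only [fPowCoeff, ← add_assoc, qfact_succ, show s + t + 1 + 1 = s + t + 2 by omega,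
    show s + (t + 1) = s + t + 1 by omega, show s + 1 + t = s + t + 1 by omega]
  rw [hleft, hpascal]
  linear_combination -qint q (j + t + 1 : ℕ) * qbinom q (s + t + 1) (s + 1) *
    (qfact q (i + s) * qint q (i + s + 1 : ℕ) / qfact q i) * (qfact q (j + t) / qfact q j) * hright

end FPow

section Iterate

variable {q : ℂ}

theorem uext_of_le {m n : ℕ} (u : W m n) {a b : ℕ} (ha : a ≤ m) (hb : b ≤ n) :
    uext u a b = u ⟨a, by omega⟩ ⟨b, by omega⟩ := dif_pos ⟨ha, hb⟩

noncomputable def fTLinear (q : ℂ) (m n : ℕ) : Module.End ℂ (W m n) where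
  toFun := fT q m n
  map_add' u v := by
    funext a b
    simp only [fT, uext, Pi.add_apply]
    split_ifs <;> ring
  map_smul' c u := by
    funext a b
    simp only [fT, uext, Pi.smul_apply, smul_eq_mul, RingHom.id_apply]
    split_ifs <;> ring

theorem fT_iterate_eq_coe_pow (m n N : ℕ) : (fT q m n)^[N] = ⇑(fTLinear q m n ^ N) :=
  (Module.End.coe_pow (fTLinear q m n) N).symm

theorem fT_iterate_basisW_apply (hq : q ≠ 0) (hq' : NotRootOfUnity q) (m n N i j : ℕ)
    (a : Fin (m + 1)) (b : Fin (n + 1)) :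
    (fT q m n)^[N] (basisW m n i j) a b
      = if i ≤ a ∧ j ≤ b ∧ (a - i) + (b - j) = N
        then fPowCoeff q m i j (a - i) (b - j) else 0 := by
  induction N generalizing a b with
  | zero =>
    by_cases h : (a : ℕ) = i ∧ (b : ℕ) = j
    · simp [basisW, h, fPowCoeff_zero_zero hq hq']
    · rw [if_neg (by omega)]
      simp [basisW, h]
  | succ N ih =>
    obtain ⟨a, ha⟩ := a
    obtain ⟨b, hb⟩ := b
    rw [Function.iterate_succ_apply']
    simp only [fT, uext_of_le _ (show a - 1 ≤ m by omega) (show b ≤ n by omega),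
      uext_of_le _ (show a ≤ m by omega) (show b - 1 ≤ n by omega), ih]
    by_cases hc : i ≤ a ∧ j ≤ b ∧ a - i + (b - j) = N + 1
    · obtain ⟨s, rfl⟩ := Nat.exists_eq_add_of_le hc.1
      obtain ⟨t, rfl⟩ := Nat.exists_eq_add_of_le hc.2.1
      rw [if_pos hc]
      rcases s with _ | s <;> rcases t with _ | t
      · omega
      · rw [if_neg (by omega), if_pos (by omega)]
        simp [fPowCoeff_zero_succ hq hq', add_assoc]
      · rw [if_pos (by omega), if_neg (by omega)]
        simp [fPowCoeff_succ_zero hq hq', add_assoc]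
      · rw [if_pos (by omega), if_pos (by omega)]
        simp [fPowCoeff_succ_succ hq hq', add_assoc]
    · rw [if_neg hc]
      -- at `a = 0` (or `b = 0`) the truncated index `a - 1` may pass the guard, but `[0]_q = 0`
      have hleft : qint q a * (if i ≤ a - 1 ∧ j ≤ b ∧ a - 1 - i + (b - j) = N
          then fPowCoeff q m i j (a - 1 - i) (b - j) else 0) = 0 := by
        rcases Nat.eq_zero_or_pos a with rfl | ha0
        · simp [qint]
        · rw [if_neg (by omega), mul_zero]
      have hright : q ^ (-((m : ℤ) - 2 * a)) * qint q b
          * (if i ≤ a ∧ j ≤ b - 1 ∧ a - i + (b - 1 - j) = N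
            then fPowCoeff q m i j (a - i) (b - 1 - j) else 0) = 0 := by
        rcases Nat.eq_zero_or_pos b with rfl | hb0
        · simp [qint]
        · rw [if_neg (by omega), mul_zero]
      rw [hleft, hright, add_zero]

end Iterate

theorem cOmega_mul_fPowCoeff {q : ℂ} (hq : q ≠ 0) {m n l i : ℕ} (hlm : l ≤ m) (hln : l ≤ n)
    (hil : i ≤ l) (himl : i ≤ m - l) :
    cOmega q m n l i * fPowCoeff q m i (l - i) (m - l - i) (n - (l - i))
      = q ^ (-(l : ℤ) * ((n : ℤ) - (l : ℤ))) *
          ((-1 : ℂ) ^ i * q ^ (-(i : ℤ)) *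
            (qfact q (m + n - 2 * l) * qfact q (m - l) * qfact q n /
              (qfact q (m - l - i) * qfact q (n - l + i) * qfact q i * qfact q (l - i))) *
            ∏ j ∈ Finset.range (i + 1),
              qint q ((n : ℤ) - (l : ℤ) + (j : ℤ)) / qint q ((m : ℤ) - (j : ℤ) + 1)) := by
  have hexp : q ^ ((i : ℤ) * (2 * l - n - i - 1))
        * q ^ (((m - l - i : ℕ) : ℤ) * (n - (l - i) : ℕ) - (n - (l - i) : ℕ) * (m - 2 * i))
      = q ^ (-(l : ℤ) * ((n : ℤ) - (l : ℤ))) * q ^ (-(i : ℤ)) := by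
    rw [← zpow_add₀ hq, ← zpow_add₀ hq]
    congr 1
    push_cast [Nat.sub_sub, Nat.cast_sub (by omega : l - i ≤ n),
      Nat.cast_sub (by omega : l + i ≤ m), Nat.cast_sub hil]
    ring
  simp only [cOmega, fPowCoeff, qbinom, show m - l - i + (n - (l - i)) = m + n - 2 * l by omega,
    show m + n - 2 * l - (m - l - i) = n - l + i by omega, show i + (m - l - i) = m - l by omega,
    show l - i + (n - (l - i)) = n by omega]
  linear_combination (-1 : ℂ) ^ i *
    (∏ j ∈ Finset.range (i + 1), qint q ((n : ℤ) - l + j) / qint q ((m : ℤ) - j + 1)) *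
    (qfact q (m + n - 2 * l) * qfact q (m - l) * qfact q n /
      (qfact q (m - l - i) * qfact q (n - l + i) * qfact q i * qfact q (l - i))) * hexp

/-- The coefficient of `v_{m-l} ⊗ w_n` in `f^{m+n-2l} Ω_l`. -/
theorem coeff_f_pow_Omega (q : ℂ) (hq : q ≠ 0) (hq' : NotRootOfUnity q)
    (m n l : ℕ) (hl : l ≤ min m n) :
    (fT q m n)^[m + n - 2 * l] (Omega q m n l) ⟨m - l, by omega⟩ ⟨n, by omega⟩
      = q ^ (-(l : ℤ) * ((n : ℤ) - (l : ℤ))) *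
          ∑ i ∈ Finset.range (min l (m - l) + 1),
            (-1 : ℂ) ^ i * q ^ (-(i : ℤ)) *
              (qfact q (m + n - 2 * l) * qfact q (m - l) * qfact q n /
                (qfact q (m - l - i) * qfact q (n - l + i) * qfact q i * qfact q (l - i))) *
              ∏ j ∈ Finset.range (i + 1),
                qint q ((n : ℤ) - (l : ℤ) + (j : ℤ)) / qint q ((m : ℤ) - (j : ℤ) + 1) := by
  have hsupport : {i ∈ Finset.range (l + 1) |
      i ≤ m - l ∧ l - i ≤ n ∧ m - l - i + (n - (l - i)) = m + n - 2 * l}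
      = Finset.range (min l (m - l) + 1) := by
    ext i
    simp only [Finset.mem_filter, Finset.mem_range]
    omega
  rw [Omega, fT_iterate_eq_coe_pow, map_sum]
  simp only [map_smul, Finset.sum_apply, Pi.smul_apply, smul_eq_mul, ← fT_iterate_eq_coe_pow,
    fT_iterate_basisW_apply hq hq', mul_ite, mul_zero]
  rw [← Finset.sum_filter, hsupport, Finset.mul_sum]
  refine Finset.sum_congr rfl fun i hi => ?_
  rw [Finset.mem_range] at hi
  exact cOmega_mul_fPowCoeff hq (by omega) (by omega) (by omega) (by omega)
end

section
/- Assume n ≤ m and let x, y be nonzero complex numbers. Let Ω_0 = ([n]_q/[m+1]_q) v_0 ⊗ w_0, for 0 ≤ j ≤ l ≤ n let φ_{l,j} = e_0^{l-j} f^j Ω_0, and write φ_{l,j} = ∑_{i=0}^{l} γ_{l,j}^{i,l-i} v_i ⊗ w_{l-i}. Then the coefficients satisfy the recurrences (with the convention that out-of-range γ's vanish): γ_{l+1,0}^{i,l+1-i} = y q^{-1} [l-i+1]_q γ_{l,0}^{i,l-i} + x q^{-n+2l-2i+1} [i]_q γ_{l,0}^{i-1,l+1-i}, and for j = 1, 2,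 ..., l+1: γ_{l+1,j}^{i,l-i+1} = q^{-m+2i} [l-i+1]_q γ_{l,j-1}^{i,l-i} + [i]_q γ_{l,j-1}^{i-1,l-i+1}. -/
open scoped BigOperators

/-- `φ_{l,j} = e₀^{l-j} f^j Ω₀` in `V_m(x) ⊗ V_n(y)`. -/
noncomputable def phiLJ (q x y : ℂ) (m n l j : ℕ) : W m n :=
  (e0T q x y m n)^[l - j] ((fT q m n)^[j] (Omega q m n 0))

/-- The coefficient `γ_{l,j}^{i,l-i}` of `v_i ⊗ w_{l-i}` in `φ_{l,j} = e₀^{l-j} f^j Ω₀`,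
with the convention that out-of-range `γ`'s vanish. -/
noncomputable def gam (q x y : ℂ) (m n l j : ℕ) (i : ℤ) : ℂ :=
  if h : j ≤ l ∧ l ≤ n ∧ n ≤ m ∧ 0 ≤ i ∧ i ≤ (l : ℤ) then
    phiLJ q x y m n l j ⟨i.toNat, by omega⟩ ⟨l - i.toNat, by omega⟩
  else 0

/-- The determinant `|Δ_l|` of the `(l+1) × (l+1)` coefficient matrix `(γ_{l,j}^{i,l-i})`,
rows indexed by `j` and columns by `i`. -/
noncomputable def deltaDet (q x y : ℂ) (m n l : ℕ) : ℂ :=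
  Matrix.det (Matrix.of fun j i : Fin (l + 1) => gam q x y m n l (j : ℕ) ((i : ℕ) : ℤ))

section Aux

lemma qint_zero (q : ℂ) : qint q 0 = 0 := by simp [qint]

lemma uext_in {m n : ℕ} (v : W m n) {a b : ℕ} (ha : a ≤ m) (hb : b ≤ n) :
    uext v a b = v ⟨a, by omega⟩ ⟨b, by omega⟩ := dif_pos ⟨ha, hb⟩

lemma e0T_fT_comm (q x y : ℂ) (hq : q ≠ 0) (m n : ℕ) (u : W m n) :
    e0T q x y m n (fT q m n u) = fT q m n (e0T q x y m n u) := by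
  funext a b
  obtain ⟨A, hA⟩ := a
  obtain ⟨B, hB⟩ := b
  have hA' : A ≤ m := by omega
  have hB' : B ≤ n := by omega
  simp only [e0T, fT, Fin.val_mk]
  rw [uext_in _ (by omega : A - 1 ≤ m) hB', uext_in _ hA' (by omega : B - 1 ≤ n),
      uext_in _ (by omega : A - 1 ≤ m) hB', uext_in _ hA' (by omega : B - 1 ≤ n)]
  simp only [e0T, fT, Fin.val_mk]
  rcases Nat.eq_zero_or_pos A with rfl | hA0 <;> rcases Nat.eq_zero_or_pos B with rfl | hB0
  · simp [qint_zero]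
  · simp only [Nat.zero_sub, Nat.cast_zero, qint_zero]; ring
  · simp only [Nat.zero_sub, Nat.cast_zero, qint_zero]; ring
  · have cA : ((A - 1 : ℕ) : ℤ) = (A : ℤ) - 1 := by omega
    have cB : ((B - 1 : ℕ) : ℤ) = (B : ℤ) - 1 := by omega
    rw [cA, cB]
    have key : q ^ (-((n : ℤ) - 2 * (B : ℤ))) * q ^ (-((m : ℤ) - 2 * ((A : ℤ) - 1)))
        = q ^ (-((m : ℤ) - 2 * (A : ℤ))) * q ^ (-((n : ℤ) - 2 * ((B : ℤ) - 1))) := by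
      rw [← zpow_add₀ hq, ← zpow_add₀ hq]; ring_nf
    linear_combination (q⁻¹ * x * qint q (A : ℤ) * qint q (B : ℤ) *
        uext u (A - 1) (B - 1)) * key

lemma phiLJ_succ_zero (q x y : ℂ) (m n l : ℕ) :
    phiLJ q x y m n (l + 1) 0 = e0T q x y m n (phiLJ q x y m n l 0) := by
  simp only [phiLJ, Nat.sub_zero, Function.iterate_succ', Function.comp_apply]

lemma phiLJ_succ_pos (q x y : ℂ) (hq : q ≠ 0) (m n l j : ℕ) (hj : 1 ≤ j) :
    phiLJ q x y m n (l + 1) j = fT q m n (phiLJ q x y m n l (j - 1)) := by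
  have hc : Function.Commute (e0T q x y m n) (fT q m n) :=
    fun u => e0T_fT_comm q x y hq m n u
  obtain ⟨j', rfl⟩ : ∃ j', j = j' + 1 := ⟨j - 1, by omega⟩
  simp only [phiLJ, Nat.add_sub_cancel]
  have h1 : l + 1 - (j' + 1) = l - j' := by omega
  rw [Function.iterate_succ', Function.comp_apply, h1, (hc.iterate_left (l - j')) _]

lemma gam_nat (q x y : ℂ) (m n l j a b : ℕ) (h1 : j ≤ l) (h2 : l ≤ n) (h3 : n ≤ m)
    (h5 : a ≤ l) (hb : b = l - a) :
    gam q x y m n l j ((a : ℕ) : ℤ)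
      = phiLJ q x y m n l j ⟨a, by omega⟩ ⟨b, by omega⟩ := by
  subst hb
  have : gam q x y m n l j ((a : ℕ) : ℤ) = _ :=
    dif_pos (show j ≤ l ∧ l ≤ n ∧ n ≤ m ∧ 0 ≤ ((a : ℕ) : ℤ) ∧ ((a : ℕ) : ℤ) ≤ (l : ℤ) from
      ⟨h1, h2, h3, by positivity, by exact_mod_cast h5⟩)
  rw [this]
  congr 1 <;> exact Fin.ext (by simp)

lemma gam_neg (q x y : ℂ) (m n l j : ℕ) (i : ℤ) (hi : i < 0 ∨ (l : ℤ) < i) :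
    gam q x y m n l j i = 0 := by
  rw [gam, dif_neg]
  rintro ⟨-, -, -, h4, h5⟩
  omega

end Aux


/-- The recurrences for the coefficients `γ_{l,j}^{i,l-i}` of `φ_{l,j}` (out-of-range `γ`'s
vanish):
`γ_{l+1,0}^{i,l+1-i} = y q⁻¹ [l-i+1]_q γ_{l,0}^{i,l-i} + x q^{-n+2l-2i+1} [i]_q γ_{l,0}^{i-1,l+1-i}`
and for `1 ≤ j ≤ l+1`:
`γ_{l+1,j}^{i,l-i+1} = q^{-m+2i} [l-i+1]_q γ_{l,j-1}^{i,l-i} + [i]_q γ_{l,j-1}^{i-1,l-i+1}`. -/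

theorem gamma_recurrences (q : ℂ) (hq : q ≠ 0) (hq' : NotRootOfUnity q)
    (x y : ℂ) (hx : x ≠ 0) (hy : y ≠ 0)
    (m n : ℕ) (hnm : n ≤ m) (l : ℕ) (hl : l + 1 ≤ n) :
    (∀ i : ℤ, 0 ≤ i → i ≤ (l : ℤ) + 1 →
      gam q x y m n (l + 1) 0 i
        = y * q⁻¹ * qint q ((l : ℤ) - i + 1) * gam q x y m n l 0 i
          + x * q ^ (-(n : ℤ) + 2 * (l : ℤ) - 2 * i + 1) * qint q i *
              gam q x y m n l 0 (i - 1)) ∧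
    (∀ j : ℕ, 1 ≤ j → j ≤ l + 1 → ∀ i : ℤ, 0 ≤ i → i ≤ (l : ℤ) + 1 →
      gam q x y m n (l + 1) j i
        = q ^ (-(m : ℤ) + 2 * i) * qint q ((l : ℤ) - i + 1) * gam q x y m n l (j - 1) i
          + qint q i * gam q x y m n l (j - 1) (i - 1)) := by
  have hln : l ≤ n := by omega
  constructor
  · intro i hi0 hi1
    obtain ⟨a, rfl⟩ : ∃ a : ℕ, i = ((a : ℕ) : ℤ) := ⟨i.toNat, (Int.toNat_of_nonneg hi0).symm⟩
    have hal : a ≤ l + 1 := by exact_mod_cast hi1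
    rw [gam_nat q x y m n (l + 1) 0 a (l + 1 - a) (by omega) hl hnm hal rfl, phiLJ_succ_zero]
    set P := phiLJ q x y m n l 0 with hP
    simp only [e0T, Fin.val_mk]
    have h1 : q⁻¹ * x * qint q ((a : ℕ) : ℤ) *
          q ^ (-((n : ℤ) - 2 * (((l + 1 - a : ℕ)) : ℤ))) * uext P (a - 1) (l + 1 - a)
        = x * q ^ (-(n : ℤ) + 2 * (l : ℤ) - 2 * ((a : ℕ) : ℤ) + 1) * qint q ((a : ℕ) : ℤ) *
            gam q x y m n l 0 (((a : ℕ) : ℤ) - 1) := by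
      rcases Nat.eq_zero_or_pos a with rfl | ha0
      · simp [qint_zero]
      · rw [show ((a : ℕ) : ℤ) - 1 = ((a - 1 : ℕ) : ℤ) by omega,
            gam_nat q x y m n l 0 (a - 1) (l + 1 - a) (by omega) hln hnm (by omega) (by omega),
            uext_in P (by omega) (by omega)]
        have key : q⁻¹ * q ^ (-((n : ℤ) - 2 * ((l + 1 - a : ℕ) : ℤ)))
            = q ^ (-(n : ℤ) + 2 * (l : ℤ) - 2 * ((a : ℕ) : ℤ) + 1) := by
          rw [← zpow_neg_one, ← zpow_add₀ hq]
          congr 1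
          omega
        rw [← key]
        ring
    have h2 : q⁻¹ * y * qint q ((l + 1 - a : ℕ) : ℤ) * uext P a (l + 1 - a - 1)
        = y * q⁻¹ * qint q ((l : ℤ) - ((a : ℕ) : ℤ) + 1) * gam q x y m n l 0 ((a : ℕ) : ℤ) := by
      rcases Nat.lt_or_ge a (l + 1) with ha0 | ha0
      · rw [show l + 1 - a - 1 = l - a by omega,
            gam_nat q x y m n l 0 a (l - a) (by omega) hln hnm (by omega) rfl,
            uext_in P (by omega) (by omega),
            show ((l + 1 - a : ℕ) : ℤ) = (l : ℤ) - ((a : ℕ) : ℤ) + 1 by omega]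
        ring
      · rw [show l + 1 - a = 0 by omega,
            show (l : ℤ) - ((a : ℕ) : ℤ) + 1 = 0 by omega]
        simp [qint_zero]
    rw [h1, h2]
    ring
  · intro j hj1 hjl i hi0 hi1
    obtain ⟨a, rfl⟩ : ∃ a : ℕ, i = ((a : ℕ) : ℤ) := ⟨i.toNat, (Int.toNat_of_nonneg hi0).symm⟩
    have hal : a ≤ l + 1 := by exact_mod_cast hi1
    rw [gam_nat q x y m n (l + 1) j a (l + 1 - a) hjl hl hnm hal rfl, phiLJ_succ_pos q x y hq m n l j hj1]
    set P := phiLJ q x y m n l (j - 1) with hP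
    simp only [fT, Fin.val_mk]
    have h1 : qint q ((a : ℕ) : ℤ) * uext P (a - 1) (l + 1 - a)
        = qint q ((a : ℕ) : ℤ) * gam q x y m n l (j - 1) (((a : ℕ) : ℤ) - 1) := by
      rcases Nat.eq_zero_or_pos a with rfl | ha0
      · simp [qint_zero]
      · rw [show ((a : ℕ) : ℤ) - 1 = ((a - 1 : ℕ) : ℤ) by omega,
            gam_nat q x y m n l (j - 1) (a - 1) (l + 1 - a) (by omega) hln hnm (by omega) (by omega),
            uext_in P (by omega) (by omega)]
    have h2 : q ^ (-((m : ℤ) - 2 * ((a : ℕ) : ℤ))) * qint q ((l + 1 - a : ℕ) : ℤ) *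
          uext P a (l + 1 - a - 1)
        = q ^ (-(m : ℤ) + 2 * ((a : ℕ) : ℤ)) * qint q ((l : ℤ) - ((a : ℕ) : ℤ) + 1) *
            gam q x y m n l (j - 1) ((a : ℕ) : ℤ) := by
      rcases Nat.lt_or_ge a (l + 1) with ha0 | ha0
      · rw [show l + 1 - a - 1 = l - a by omega,
            gam_nat q x y m n l (j - 1) a (l - a) (by omega) hln hnm (by omega) rfl,
            uext_in P (by omega) (by omega),
            show ((l + 1 - a : ℕ) : ℤ) = (l : ℤ) - ((a : ℕ) : ℤ) + 1 by omega,
            show -((m : ℤ) - 2 * ((a : ℕ) : ℤ)) = -(m : ℤ) + 2 * ((a : ℕ) : ℤ) by ring]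
      · rw [show l + 1 - a = 0 by omega,
            show (l : ℤ) - ((a : ℕ) : ℤ) + 1 = 0 by omega]
        simp [qint_zero]
    rw [h1, h2]
    ring
end
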